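/- Suppose the graph G on n vertices has no independent set of size k. Then for ε ≤ 1/(5k), every ε-well-supported Nash equilibrium (x, y) of the game (R, C) constructed from G satisfies supp(x) = supp(y) = {2n+1}, i.e., both players play only the last pure strategy. -/

import Mathlib

open Finset Matrix

abbrev Strat (n : ℕ) := Fin n ⊕ (Fin n ⊕ Unit)

/-- The row-payoff matrix of the game built from a graph with adjacency
matrix E, γ = 1/2: blocks A = 1 − E + γI, B = −M·I, B' = (k+γ)·I,
last column −1, last row 1 + γ/k, bottom-right entry 1.  C = Rᵀ. -/
noncomputable def Rmat (n k : ℕ) (E : Matrix (Fin n) (Fin n) ℝ) (M : ℝ) :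
    Matrix (Strat n) (Strat n) ℝ := fun i j =>
  match i, j with
  | .inl u, .inl v => 1 - E u v + (1/2) * (if u = v then 1 else 0)
  | .inl u, .inr (.inl v) => -M * (if u = v then 1 else 0)
  | .inl _, .inr (.inr _) => -1
  | .inr (.inl u), .inl v => ((k : ℝ) + 1/2) * (if u = v then 1 else 0)
  | .inr (.inl _), .inr (.inl _) => 0
  | .inr (.inl _), .inr (.inr _) => -1
  | .inr (.inr _), .inl _ => 1 + (1/2) / (k : ℝ)
  | .inr (.inr _), .inr (.inl _) => 1 + (1/2) / (k : ℝ)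
  | .inr (.inr _), .inr (.inr _) => 1

def InSimplex {I : Type*} [Fintype I] (x : I → ℝ) : Prop :=
  (∀ i, 0 ≤ x i) ∧ ∑ i, x i = 1

def IsWNE {I : Type*} [Fintype I] (R C : Matrix I I ℝ) (ε : ℝ)
    (x y : I → ℝ) : Prop :=
  (∀ i, 0 < x i → ∀ k, (∑ j, R k j * y j) - ε ≤ ∑ j, R i j * y j) ∧
  (∀ j, 0 < y j → ∀ k, (∑ i, x i * C i k) - ε ≤ ∑ i, x i * C i j)

/-!
The game is symmetric, so `(x, y)` is an ε-WNE of `(R, Rᵀ)` exactly when each of `x`, `y` is an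
ε-well-supported response to the other under `R`. If a vertex `u` is played, comparing it with the
last strategy gives `z_u / 2 ≥ (z-weight of the neighbours of u) + 1/(2k) - ε`, where `z` is the
opponent's strategy and `1/(2k) - ε > 0`. Hence the vertex supports of `x` and `y` coincide and form
an independent set, and the vertex part of `y` carries all but `O(ε)` of its mass. Comparing `u` with
its punishment strategy bounds `k z_u ≤ 1 + ε`, so that support has at least `k` vertices, which is
impossible. Once no vertex is played, every punishment strategy pays `-z_last` while the last
strategy pays at least `1`.
-/

def IsWellSupportedResponse {I : Type*} [Fintype I] (R : Matrix I I ℝ) (ε : ℝ)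
    (w z : I → ℝ) : Prop :=
  ∀ i, 0 < w i → ∀ l, (R *ᵥ z) l - ε ≤ (R *ᵥ z) i

theorem isWNE_transpose_iff {I : Type*} [Fintype I] {R : Matrix I I ℝ} {ε : ℝ} {x y : I → ℝ} :
    IsWNE R Rᵀ ε x y ↔
      IsWellSupportedResponse R ε x y ∧ IsWellSupportedResponse R ε y x := by
  simp only [IsWNE, IsWellSupportedResponse, ← vecMul_transpose R x]
  rfl

section
variable {n k : ℕ} {E : Matrix (Fin n) (Fin n) ℝ} {M : ℝ}

theorem Rmat_mulVec_inl (u : Fin n) (z : Strat n → ℝ) :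
    (Rmat n k E M *ᵥ z) (.inl u) = ∑ v, z (.inl v) - ∑ v, E u v * z (.inl v) + z (.inl u) / 2
      - M * z (.inr (.inl u)) - z (.inr (.inr ())) := by
  simp only [mulVec, dotProduct, Rmat, one_div, mul_ite, mul_one, mul_zero, Fintype.sum_sum_type,
    add_mul, sub_mul, one_mul, ite_mul, zero_mul, sum_add_distrib, sum_sub_distrib, sum_ite_eq,
    mem_univ, ↓reduceIte, neg_mul, univ_unique, PUnit.default_eq_unit, sum_neg_distrib,
    sum_singleton]
  ring

theorem Rmat_mulVec_inr_inl (u : Fin n) (z : Strat n → ℝ) :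
    (Rmat n k E M *ᵥ z) (.inr (.inl u)) = ((k : ℝ) + 1 / 2) * z (.inl u) - z (.inr (.inr ())) := by
  simp only [mulVec, dotProduct, Rmat, one_div, mul_ite, mul_one, mul_zero, Fintype.sum_sum_type,
    ite_mul, zero_mul, sum_ite_eq, mem_univ, ↓reduceIte, sum_const_zero, univ_unique,
    PUnit.default_eq_unit, neg_mul, one_mul, sum_neg_distrib, sum_singleton, zero_add]
  ring

theorem Rmat_mulVec_inr_inr (z : Strat n → ℝ) :
    (Rmat n k E M *ᵥ z) (.inr (.inr ())) =
      (1 + 1 / (2 * k)) * (∑ v, z (.inl v) + ∑ v, z (.inr (.inl v))) + z (.inr (.inr ())) := by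
  simp only [mulVec, dotProduct, Rmat, one_div, mul_ite, mul_one, mul_zero, Fintype.sum_sum_type,
    ← mul_sum, univ_unique, PUnit.default_eq_unit, one_mul, sum_singleton, _root_.mul_inv_rev]
  ring
end

theorem InSimplex.sum_strat {n : ℕ} {z : Strat n → ℝ} (hz : InSimplex z) :
    ∑ v, z (.inl v) + ∑ v, z (.inr (.inl v)) + z (.inr (.inr ())) = 1 := by
  simpa [Fintype.sum_sum_type, add_assoc] using hz.2

namespace IsWellSupportedResponse

variable {n k : ℕ} {E : Matrix (Fin n) (Fin n) ℝ} {M ε : ℝ} {w z : Strat n → ℝ}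

theorem Rmat_inl_vs_last (hM : 0 ≤ M) (hz : InSimplex z)
    (hwz : IsWellSupportedResponse (Rmat n k E M) ε w z) {u : Fin n} (hu : 0 < w (.inl u)) :
    ∑ v, E u v * z (.inl v) + (∑ v, z (.inr (.inl v)) + z (.inr (.inr ()))) + 1 / (2 * k) - ε
      ≤ z (.inl u) / 2 := by
  have h := hwz _ hu (.inr (.inr ()))
  rw [Rmat_mulVec_inl, Rmat_mulVec_inr_inr] at h
  have hc : 1 / (2 * (k : ℝ)) ≤ 1 := by
    calc 1 / (2 * (k : ℝ)) = (k : ℝ)⁻¹ / 2 := by ring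
      _ ≤ 1 := by linarith [Nat.cast_inv_le_one (α := ℝ) k]
  have hMz := mul_nonneg hM (hz.1 (.inr (.inl u)))
  have hzl := hz.1 (.inr (.inr ()))
  have hsum := hz.sum_strat
  have hcz : 1 / (2 * (k : ℝ)) * (∑ v, z (.inl v) + ∑ v, z (.inr (.inl v)) + z (.inr (.inr ())))
      = 1 / (2 * k) := by rw [hsum, mul_one]
  linarith [mul_le_mul_of_nonneg_right hc hzl]

theorem Rmat_inl_vs_inr_inl (hE : ∀ u v, 0 ≤ E u v) (hM : 0 ≤ M) (hz : InSimplex z)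
    (hwz : IsWellSupportedResponse (Rmat n k E M) ε w z) {u : Fin n} (hu : 0 < w (.inl u)) :
    k * z (.inl u) ≤ 1 + ε := by
  have h := hwz _ hu (.inr (.inl u))
  rw [Rmat_mulVec_inl, Rmat_mulVec_inr_inl] at h
  have hEz : 0 ≤ ∑ v, E u v * z (.inl v) :=
    Finset.sum_nonneg fun v _ => mul_nonneg (hE u v) (hz.1 _)
  have hMz := mul_nonneg hM (hz.1 (.inr (.inl u)))
  have hpunish : 0 ≤ ∑ v, z (.inr (.inl v)) := Finset.sum_nonneg fun v _ => hz.1 _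
  linarith [hz.sum_strat, hz.1 (.inr (.inr ()))]

theorem Rmat_inl_pos (hE : ∀ u v, 0 ≤ E u v) (hM : 0 ≤ M) (hε : ε < 1 / (2 * k))
    (hz : InSimplex z) (hwz : IsWellSupportedResponse (Rmat n k E M) ε w z) {u : Fin n}
    (hu : 0 < w (.inl u)) : 0 < z (.inl u) := by
  have h := hwz.Rmat_inl_vs_last hM hz hu
  have hEz : 0 ≤ ∑ v, E u v * z (.inl v) :=
    Finset.sum_nonneg fun v _ => mul_nonneg (hE u v) (hz.1 _)
  have hpunish : 0 ≤ ∑ v, z (.inr (.inl v)) := Finset.sum_nonneg fun v _ => hz.1 _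
  linarith [hz.1 (.inr (.inr ()))]

theorem Rmat_inr_inl_pos (hε : ε < 1) (hz : InSimplex z)
    (hwz : IsWellSupportedResponse (Rmat n k E M) ε w z) {u : Fin n}
    (hu : 0 < w (.inr (.inl u))) : 0 < z (.inl u) := by
  have h := hwz _ hu (.inr (.inr ()))
  rw [Rmat_mulVec_inr_inl, Rmat_mulVec_inr_inr] at h
  have hmass : 0 ≤ ∑ v, z (.inl v) + ∑ v, z (.inr (.inl v)) :=
    add_nonneg (Finset.sum_nonneg fun v _ => hz.1 _) (Finset.sum_nonneg fun v _ => hz.1 _)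
  have hc : 0 ≤ 1 / (2 * (k : ℝ)) * (∑ v, z (.inl v) + ∑ v, z (.inr (.inl v))) :=
    mul_nonneg (by positivity) hmass
  have hk : 0 < (k : ℝ) + 1 / 2 := by positivity
  have : 0 < ((k : ℝ) + 1 / 2) * z (.inl u) := by
    linarith [hz.sum_strat, hz.1 (.inr (.inr ()))]
  exact pos_of_mul_pos_right this hk.le

end IsWellSupportedResponse

noncomputable def vertexSupport {n : ℕ} (x : Strat n → ℝ) : Finset (Fin n) :=
  univ.filter fun u => 0 < x (.inl u)

section

variable {n k : ℕ} {E : Matrix (Fin n) (Fin n) ℝ} {M ε : ℝ} {x y : Strat n → ℝ}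

-- an edge of weight `≥ 1/2` inside the support would force both `y_v < y_u` and `y_u < y_v`
theorem Rmat_vertexSupport_lt_half (hE : ∀ u v, 0 ≤ E u v) (hsym : ∀ u v, E u v = E v u)
    (hM : 0 ≤ M) (hε : ε < 1 / (2 * k)) (hy : InSimplex y)
    (hxy : IsWellSupportedResponse (Rmat n k E M) ε x y) {u v : Fin n}
    (hu : u ∈ vertexSupport x) (hv : v ∈ vertexSupport x) : E u v < 1 / 2 := by
  by_contra! huv
  have key : ∀ {a b}, a ∈ vertexSupport x → 1 / 2 ≤ E a b →
      y (.inl b) / 2 + 1 / (2 * k) - ε ≤ y (.inl a) / 2 := by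
    intro a b ha hab
    have h := hxy.Rmat_inl_vs_last hM hy (Finset.mem_filter.1 ha).2
    have hb : E a b * y (.inl b) ≤ ∑ c, E a c * y (.inl c) :=
      Finset.single_le_sum (f := fun c => E a c * y (.inl c))
        (fun c _ => mul_nonneg (hE a c) (hy.1 _)) (Finset.mem_univ b)
    have hpunish : 0 ≤ ∑ c, y (.inr (.inl c)) := Finset.sum_nonneg fun c _ => hy.1 _
    linarith [mul_le_mul_of_nonneg_right hab (hy.1 (.inl b)), hy.1 (.inr (.inr ()))]
  linarith [key hu huv, key hv (hsym u v ▸ huv)]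

theorem Rmat_le_card_vertexSupport (hE : ∀ u v, 0 ≤ E u v) (hM : 0 ≤ M) (hk : 0 < k)
    (hε0 : 0 ≤ ε) (hε : ε ≤ 1 / (5 * k)) (hy : InSimplex y)
    (hxy : IsWellSupportedResponse (Rmat n k E M) ε x y)
    (hsupp : ∀ u, 0 < y (.inl u) → u ∈ vertexSupport x) (hne : (vertexSupport x).Nonempty) :
    k ≤ #(vertexSupport x) := by
  set S := vertexSupport x
  have hk' : (0 : ℝ) < k := Nat.cast_pos.2 hk
  have hkε : k * ε ≤ 1 / 5 := by
    rw [le_div_iff₀ (by positivity)] at hε; linarith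
  have hvertex : ∑ u, y (.inl u) = ∑ u ∈ S, y (.inl u) :=
    (Finset.sum_subset (Finset.subset_univ S) fun u _ hu =>
      ((hy.1 _).eq_of_not_lt fun hpos => hu (hsupp u hpos)).symm).symm
  have hupper : k * ∑ u, y (.inl u) ≤ #S * (1 + ε) := by
    rw [hvertex, Finset.mul_sum, ← nsmul_eq_mul, ← Finset.sum_const]
    exact Finset.sum_le_sum fun u hu =>
      hxy.Rmat_inl_vs_inr_inl hE hM hy (Finset.mem_filter.1 hu).2
  -- the off-vertex mass of `y` is `O(ε)`, read off at any vertex of the support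
  obtain ⟨u, hu⟩ := hne
  have hlower : k * (∑ v, y (.inr (.inl v)) + y (.inr (.inr ()))) ≤ k * ε + ε / 2 := by
    have h := hxy.Rmat_inl_vs_last hM hy (Finset.mem_filter.1 hu).2
    have hb := hxy.Rmat_inl_vs_inr_inl hE hM hy (Finset.mem_filter.1 hu).2
    have hEy : 0 ≤ ∑ v, E u v * y (.inl v) :=
      Finset.sum_nonneg fun v _ => mul_nonneg (hE u v) (hy.1 _)
    have hc : (k : ℝ) * (1 / (2 * k)) = 1 / 2 := by field_simp
    linarith [mul_le_mul_of_nonneg_left h hk'.le, mul_nonneg hk'.le hEy]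
  by_contra! hlt
  have hcard : (#S : ℝ) ≤ k - 1 := by
    have : #S + 1 ≤ k := hlt
    exact le_sub_iff_add_le.2 (by exact_mod_cast this)
  have hZ : k * ∑ u, y (.inl u) = k - k * (∑ v, y (.inr (.inl v)) + y (.inr (.inr ()))) := by
    linear_combination (k : ℝ) * hy.sum_strat
  linarith [mul_le_mul_of_nonneg_right hcard (by linarith : (0 : ℝ) ≤ 1 + ε)]

theorem Rmat_inl_eq_zero (hE01 : ∀ u v, E u v = 0 ∨ E u v = 1) (hsym : ∀ u v, E u v = E v u)
    (hM : 0 ≤ M) (hk : 0 < k) (hε0 : 0 ≤ ε) (hε : ε ≤ 1 / (5 * k))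
    (hno : ¬ ∃ S : Finset (Fin n), S.card = k ∧ ∀ u ∈ S, ∀ v ∈ S, u ≠ v → E u v = 0)
    (hx : InSimplex x) (hy : InSimplex y) (hxy : IsWellSupportedResponse (Rmat n k E M) ε x y)
    (hyx : IsWellSupportedResponse (Rmat n k E M) ε y x) (u : Fin n) : x (.inl u) = 0 := by
  by_contra hu
  have hE : ∀ u v, 0 ≤ E u v := fun u v => by rcases hE01 u v with h | h <;> simp [h]
  have hε' : ε < 1 / (2 * k) :=
    hε.trans_lt (one_div_lt_one_div_of_lt (by positivity) (by gcongr; norm_num))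
  have hsupp : ∀ v, 0 < y (.inl v) → v ∈ vertexSupport x := fun v hv =>
    Finset.mem_filter.2 ⟨Finset.mem_univ v, hyx.Rmat_inl_pos hE hM hε' hx hv⟩
  have hne : (vertexSupport x).Nonempty :=
    ⟨u, Finset.mem_filter.2 ⟨Finset.mem_univ u, (hx.1 _).lt_of_ne (Ne.symm hu)⟩⟩
  obtain ⟨T, hT, hcard⟩ := Finset.exists_subset_card_eq
    (Rmat_le_card_vertexSupport hE hM hk hε0 hε hy hxy hsupp hne)
  refine hno ⟨T, hcard, fun a ha b hb _ => (hE01 a b).resolve_right fun hab => ?_⟩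
  have := Rmat_vertexSupport_lt_half hE hsym hM hε' hy hxy (hT ha) (hT hb)
  norm_num [hab] at this

theorem Rmat_eq_zero_of_ne_last (hε : ε < 1) (hx : ∀ i, 0 ≤ x i) (hy : InSimplex y)
    (hxy : IsWellSupportedResponse (Rmat n k E M) ε x y) (hxv : ∀ u, x (.inl u) = 0)
    (hyv : ∀ u, y (.inl u) = 0) : ∀ i, i ≠ .inr (.inr ()) → x i = 0
  | .inl u, _ => hxv u
  | .inr (.inl u), _ => (hx _).eq_of_not_lt' fun hu =>
      (hxy.Rmat_inr_inl_pos hε hy hu).ne' (hyv u)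
  | .inr (.inr ()), h => absurd rfl h

end

theorem no_independentSet_wne_support_general {n k : ℕ} (hk : 0 < k) (M : ℝ) (hM : 0 < M)
    (E : Matrix (Fin n) (Fin n) ℝ)
    (hE01 : ∀ u v, E u v = 0 ∨ E u v = 1)
    (hsym : ∀ u v, E u v = E v u)
    (hno : ¬ ∃ S : Finset (Fin n), S.card = k ∧
      ∀ u ∈ S, ∀ v ∈ S, u ≠ v → E u v = 0)
    (ε : ℝ) (hε0 : 0 ≤ ε) (hε : ε ≤ 1 / (5 * k))
    (x y : Strat n → ℝ) (hx : InSimplex x) (hy : InSimplex y)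
    (h : IsWNE (Rmat n k E M) (Rmat n k E M)ᵀ ε x y) :
    (∀ i, i ≠ Sum.inr (Sum.inr ()) → x i = 0) ∧
    (∀ i, i ≠ Sum.inr (Sum.inr ()) → y i = 0) := by
  obtain ⟨hxy, hyx⟩ := isWNE_transpose_iff.1 h
  have hε1 : ε < 1 := hε.trans_lt <| by
    rw [div_lt_one (by positivity)]
    exact_mod_cast (by omega : 1 < 5 * k)
  have hxv := Rmat_inl_eq_zero hE01 hsym hM.le hk hε0 hε hno hx hy hxy hyx
  have hyv := Rmat_inl_eq_zero hE01 hsym hM.le hk hε0 hε hno hy hx hyx hxy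
  exact ⟨Rmat_eq_zero_of_ne_last hε1 hx.1 hy hxy hxv hyv,
    Rmat_eq_zero_of_ne_last hε1 hy.1 hx hyx hyv hxv⟩

/-- if G has no independent set of size k, then for ε ≤ 1/(5k)
every ε-well-supported NE of (R, Rᵀ) is supported solely on the last strategy. -/
theorem no_independentSet_wne_support {n k : ℕ} (hk : 0 < k) (M : ℝ) (hM : 0 < M)
    (E : Matrix (Fin n) (Fin n) ℝ)
    (hE01 : ∀ u v, E u v = 0 ∨ E u v = 1) (hdiag : ∀ u, E u u = 0)
    (hsym : ∀ u v, E u v = E v u)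
    (hno : ¬ ∃ S : Finset (Fin n), S.card = k ∧
      ∀ u ∈ S, ∀ v ∈ S, u ≠ v → E u v = 0)
    (ε : ℝ) (hε0 : 0 ≤ ε) (hε : ε ≤ 1 / (5 * k))
    (x y : Strat n → ℝ) (hx : InSimplex x) (hy : InSimplex y)
    (h : IsWNE (Rmat n k E M) (Rmat n k E M)ᵀ ε x y) :
    (∀ i, i ≠ Sum.inr (Sum.inr ()) → x i = 0) ∧
    (∀ i, i ≠ Sum.inr (Sum.inr ()) → y i = 0) :=
  no_independentSet_wne_support_general hk M hM E hE01 hsym hno ε hε0 hε x y hx hy h
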